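/- Lipschitz continuity of the optimal value function: Let (S,d) be a finite metric space, A a nonempty finite set, P̂ a transition kernel, r : S × A → ℝ a reward function, and γ ∈ (0,1). Assume |r(s,a) − r(s',a)| ≤ L_r·d(s,s') for all s, s' ∈ S and a ∈ A, and W₁(P̂(·|s,a), P̂(·|s',a)) ≤ L_P·d(s,s') for all s, s' ∈ S and a ∈ A, with γ·L_P < 1. Then the optimal value function V*, the unique solution of V(s) = max_{a∈A} ( r(s,a) + γ·Σ_{s'} P̂(s'|s,a)·V(s') ), satisfies |V*(s) − V*(s')| ≤ (L_r/(1 − γ·L_P))·d(s,s') for all s, s' ∈ S. -/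
import Mathlib


open Finset Real

/-- `p` is a probability mass function on a finite type. -/
def IsPMF {X : Type*} [Fintype X] (p : X → ℝ) : Prop :=
  (∀ x, 0 ≤ p x) ∧ ∑ x, p x = 1

/-- `P` is a transition kernel: each `P s a` is a pmf on states. -/
def IsKernel {S A : Type*} [Fintype S] [Fintype A] (P : S → A → S → ℝ) : Prop :=
  ∀ s a, IsPMF (P s a)

/-- `pol` is a stationary policy: each `pol s` is a pmf on actions. -/
def IsPolicy {S A : Type*} [Fintype S] [Fintype A] (pol : S → A → ℝ) : Prop :=
  ∀ s, IsPMF (pol s)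

/-- `V` satisfies the Bellman evaluation equation for policy `pol` under kernel `P`,
reward `r` and discount `γ`. -/
def IsValue {S A : Type*} [Fintype S] [Fintype A] (P : S → A → S → ℝ) (pol : S → A → ℝ)
    (r : S → A → ℝ) (γ : ℝ) (V : S → ℝ) : Prop :=
  ∀ s, V s = ∑ a, pol s a * (r s a + γ * ∑ s', P s a s' * V s')

/-- `d` is the (unnormalized) discounted state-action occupancy of `pol` under kernel `P`
with initial distribution `ρ₀` and discount `γ`. -/
def IsOcc {S A : Type*} [Fintype S] [Fintype A] (P : S → A → S → ℝ) (pol : S → A → ℝ)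
    (ρ₀ : S → ℝ) (γ : ℝ) (d : S → A → ℝ) : Prop :=
  ∀ s a, d s a = pol s a * (ρ₀ s + γ * ∑ x : S × A, d x.1 x.2 * P x.1 x.2 s)

/-- ℓ₁ distance between two pmfs on a finite type. -/
noncomputable def l1Dist {X : Type*} [Fintype X] (p q : X → ℝ) : ℝ :=
  ∑ x, |p x - q x|

/-- Total variation distance between two pmfs on a finite type. -/
noncomputable def tvDist {X : Type*} [Fintype X] (p q : X → ℝ) : ℝ :=
  (1 / 2) * ∑ x, |p x - q x|

/-- Kullback-Leibler divergence between two pmfs on a finite type (finite under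
absolute continuity). -/
noncomputable def klF {X : Type*} [Fintype X] (p q : X → ℝ) : ℝ :=
  ∑ x, p x * Real.log (p x / q x)

/-- `d_data` satisfies κ-coverage for the policy set `Pol` under kernel `P`:
every occupancy of a policy in `Pol` is dominated by `κ · d_data`. -/
def KappaCoverage {S A : Type*} [Fintype S] [Fintype A] (P : S → A → S → ℝ) (ρ₀ : S → ℝ)
    (γ : ℝ) (Pol : Set (S → A → ℝ)) (ddata : S → A → ℝ) (κ : ℝ) : Prop :=
  ∀ pol ∈ Pol, ∀ dpol : S → A → ℝ, IsOcc P pol ρ₀ γ dpol → ∀ s a, dpol s a ≤ κ * ddata s a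

/-- Critic discrepancy `Δ_{D,P̂}(s,a)`. -/
noncomputable def critDelta {S A : Type*} [Fintype S] (P Phat : S → A → S → ℝ)
    (D : S → A → S → ℝ) (s : S) (a : A) : ℝ :=
  (∑ s', P s a s' * D s a s') - ∑ s', Phat s a s' * D s a s'

/-- Supremum over the critic class of the critic discrepancy at `(s,a)`. -/
noncomputable def critSup {S A : Type*} [Fintype S] (𝒟 : Set (S → A → S → ℝ))
    (P Phat : S → A → S → ℝ) (s : S) (a : A) : ℝ :=
  sSup {y | ∃ D ∈ 𝒟, y = critDelta P Phat D s a}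

/-- 1-Wasserstein distance between two pmfs on a finite metric space
(Kantorovich–Rubinstein dual form). -/
noncomputable def w1 {X : Type*} [Fintype X] [MetricSpace X] (p q : X → ℝ) : ℝ :=
  sSup {y | ∃ f : X → ℝ, (∀ a b, |f a - f b| ≤ dist a b) ∧ y = ∑ x, (p x - q x) * f x}

lemma w1_bddAbove {X : Type*} [Fintype X] [Nonempty X] [MetricSpace X] {p q : X → ℝ}
    (hp : IsPMF p) (hq : IsPMF q) :
    BddAbove {y | ∃ f : X → ℝ, (∀ a b, |f a - f b| ≤ dist a b) ∧ y = ∑ x, (p x - q x) * f x} := by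
  obtain ⟨x0⟩ := ‹Nonempty X›
  refine ⟨∑ x, |p x - q x| * dist x x0, ?_⟩
  rintro y ⟨f, hf, rfl⟩
  have h1 : ∑ x, (p x - q x) * f x = ∑ x, (p x - q x) * (f x - f x0) := by
    simp only [mul_sub]
    rw [Finset.sum_sub_distrib, ← Finset.sum_mul]
    have : ∑ x, (p x - q x) = 0 := by
      rw [Finset.sum_sub_distrib, hp.2, hq.2]; ring
    rw [this]; ring
  rw [h1]
  apply Finset.sum_le_sum
  intro x _
  calc (p x - q x) * (f x - f x0) ≤ |(p x - q x) * (f x - f x0)| := le_abs_self _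
    _ = |p x - q x| * |f x - f x0| := abs_mul _ _
    _ ≤ |p x - q x| * dist x x0 := mul_le_mul_of_nonneg_left (hf x x0) (abs_nonneg _)

lemma w1_nonneg {X : Type*} [Fintype X] [Nonempty X] [MetricSpace X] {p q : X → ℝ}
    (hp : IsPMF p) (hq : IsPMF q) : 0 ≤ w1 p q := by
  apply le_csSup (w1_bddAbove hp hq)
  exact ⟨fun _ => 0, fun a b => by simpa using dist_nonneg, by simp⟩

lemma sum_sub_mul_le_w1 {X : Type*} [Fintype X] [Nonempty X] [MetricSpace X] {p q : X → ℝ}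
    (hp : IsPMF p) (hq : IsPMF q) {K : ℝ} (hK : 0 ≤ K) {V : X → ℝ}
    (hV : ∀ a b, |V a - V b| ≤ K * dist a b) :
    ∑ x, (p x - q x) * V x ≤ K * w1 p q := by
  rcases hK.eq_or_lt with hK0 | hK0
  · obtain ⟨x0⟩ := ‹Nonempty X›
    have hc : ∀ x, V x = V x0 := fun x => by
      have h := hV x x0; rw [← hK0, zero_mul] at h
      have := abs_nonpos_iff.mp h
      have := sub_eq_zero.mp this
      linarith
    have : ∑ x, (p x - q x) * V x = (∑ x, (p x - q x)) * V x0 := by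
      rw [Finset.sum_mul]; exact Finset.sum_congr rfl fun x _ => by rw [hc x]
    rw [this, Finset.sum_sub_distrib, hp.2, hq.2, ← hK0]
    simp
  · have hmem : ∑ x, (p x - q x) * (V x / K) ≤ w1 p q := by
      apply le_csSup (w1_bddAbove hp hq)
      refine ⟨fun x => V x / K, fun a b => ?_, rfl⟩
      rw [div_sub_div_same, abs_div, abs_of_pos hK0, div_le_iff₀ hK0]
      calc |V a - V b| ≤ K * dist a b := hV a b
        _ = dist a b * K := mul_comm _ _
    calc ∑ x, (p x - q x) * V x = K * ∑ x, (p x - q x) * (V x / K) := by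
          rw [Finset.mul_sum]
          exact Finset.sum_congr rfl fun x _ => by field_simp
      _ ≤ K * w1 p q := mul_le_mul_of_nonneg_left hmem hK0.le

/-- **Lipschitz continuity of the optimal value function.** If rewards are
`Lr`-Lipschitz and the kernel is `LP`-Lipschitz in `W₁`, with `γ LP < 1`, then the
fixed point of the Bellman optimality operator is `Lr/(1 - γ LP)`-Lipschitz. -/
theorem optimal_value_lipschitz
    {S A : Type*} [Fintype S] [Fintype A] [Nonempty S] [Nonempty A] [MetricSpace S]
    (Phat : S → A → S → ℝ) (hPhat : IsKernel Phat)
    (r : S → A → ℝ) (γ : ℝ) (hγ0 : 0 < γ) (hγ1 : γ < 1)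
    (Lr LP : ℝ)
    (hLr : ∀ s s' a, |r s a - r s' a| ≤ Lr * dist s s')
    (hLP : ∀ s s' a, w1 (Phat s a) (Phat s' a) ≤ LP * dist s s')
    (hγLP : γ * LP < 1)
    (V : S → ℝ)
    (hV : ∀ s, V s = ⨆ a : A, (r s a + γ * ∑ s', Phat s a s' * V s')) :
    ∀ s s', |V s - V s'| ≤ Lr / (1 - γ * LP) * dist s s' := by
  by_cases hsing : ∀ s s' : S, s = s'
  · intro s s'
    rw [hsing s s']
    simp
  push_neg at hsing
  obtain ⟨a0, b0, hab⟩ := hsing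
  have hd0 : 0 < dist a0 b0 := dist_pos.mpr hab
  obtain ⟨act0⟩ := ‹Nonempty A›
  -- Lr, LP are nonnegative
  have hLr0 : 0 ≤ Lr := by
    have := (abs_nonneg (r a0 act0 - r b0 act0)).trans (hLr a0 b0 act0)
    exact nonneg_of_mul_nonneg_right (by linarith [this] : (0:ℝ) ≤ dist a0 b0 * _) hd0
  have hLP0 : 0 ≤ LP := by
    have := (w1_nonneg (hPhat a0 act0) (hPhat b0 act0)).trans (hLP a0 b0 act0)
    exact nonneg_of_mul_nonneg_right (by linarith [this] : (0:ℝ) ≤ dist a0 b0 * _) hd0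
  have hden : 0 < 1 - γ * LP := by linarith
  -- the Lipschitz "constant" of V
  set K : ℝ := ⨆ p : S × S, |V p.1 - V p.2| / dist p.1 p.2 with hKdef
  have hbdd : BddAbove (Set.range fun p : S × S => |V p.1 - V p.2| / dist p.1 p.2) :=
    Set.Finite.bddAbove (Set.finite_range _)
  have hK0 : 0 ≤ K := by
    have := le_ciSup hbdd (a0, a0)
    simpa using this
  have hKlip : ∀ s s' : S, |V s - V s'| ≤ K * dist s s' := by
    intro s s'
    rcases eq_or_ne s s' with rfl | hne
    · simp
    · have hd : 0 < dist s s' := dist_pos.mpr hne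
      have := le_ciSup hbdd (s, s')
      rw [div_le_iff₀ hd] at this
      simpa [mul_comm] using this
  -- one-sided bound on V s - V s'
  have hstep : ∀ s s' : S, V s - V s' ≤ (Lr + γ * LP * K) * dist s s' := by
    intro s s'
    rw [hV s, hV s']
    have hbddf : ∀ t : S, BddAbove (Set.range fun a : A =>
        r t a + γ * ∑ x, Phat t a x * V x) := fun t =>
      Set.Finite.bddAbove (Set.finite_range _)
    rw [sub_le_iff_le_add]
    apply ciSup_le
    intro a
    have h1 : r s a - r s' a ≤ Lr * dist s s' := (le_abs_self _).trans (hLr s s' a)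
    have h2 : (∑ x, Phat s a x * V x) - ∑ x, Phat s' a x * V x ≤ LP * dist s s' * K := by
      have : ∑ x, (Phat s a x - Phat s' a x) * V x ≤ K * w1 (Phat s a) (Phat s' a) :=
        sum_sub_mul_le_w1 (hPhat s a) (hPhat s' a) hK0 hKlip
      have h3 : K * w1 (Phat s a) (Phat s' a) ≤ K * (LP * dist s s') :=
        mul_le_mul_of_nonneg_left (hLP s s' a) hK0
      have h4 : ∑ x, (Phat s a x - Phat s' a x) * V x
          = (∑ x, Phat s a x * V x) - ∑ x, Phat s' a x * V x := by
        rw [← Finset.sum_sub_distrib]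
        exact Finset.sum_congr rfl fun x _ => by ring
      rw [h4] at this
      linarith
    have h5 : r s' a + γ * ∑ x, Phat s' a x * V x
        ≤ ⨆ a : A, (r s' a + γ * ∑ x, Phat s' a x * V x) := le_ciSup (hbddf s') a
    nlinarith [h1, h2, h5]
  have habs : ∀ s s' : S, |V s - V s'| ≤ (Lr + γ * LP * K) * dist s s' := by
    intro s s'
    rw [abs_sub_le_iff]
    refine ⟨hstep s s', ?_⟩
    have := hstep s' s
    rwa [dist_comm] at this
  -- K ≤ Lr + γ LP K
  have hC0 : 0 ≤ Lr + γ * LP * K := by positivity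
  have hKle : K ≤ Lr + γ * LP * K := by
    apply ciSup_le
    rintro ⟨s, s'⟩
    rcases eq_or_ne s s' with rfl | hne
    · simpa using hC0
    · have hd : 0 < dist s s' := dist_pos.mpr hne
      rw [div_le_iff₀ hd]
      calc |V s - V s'| ≤ (Lr + γ * LP * K) * dist s s' := habs s s'
        _ = (Lr + γ * LP * K) * dist s s' := rfl
  have hKfin : K ≤ Lr / (1 - γ * LP) := by
    rw [le_div_iff₀ hden]
    nlinarith
  intro s s'
  calc |V s - V s'| ≤ K * dist s s' := hKlip s s'
    _ ≤ Lr / (1 - γ * LP) * dist s s' :=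
        mul_le_mul_of_nonneg_right hKfin dist_nonneg
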